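/- Let N, F be finite sets, c : N×F → ℝ≥0 transportation costs, and ρ > 0 a uniform penalty with ρ ≥ c i j for all i ∈ N, j ∈ F. For any (x,u) ∈ X(y,s), the cost satisfies Σ_i Σ_j c_{ij} x_{ij} + ρ Σ_i u_i ≤ ρ Σ_i d_i, and for any (x,u), (x',u') ∈ X(y,s) with Σ_i u_i ≤ Σ_i u'_i and x obtained from x' by reallocating so that Σ_i Σ_j x_{ij} ≥ Σ_i Σ_j x'_{ij}, if Σ_i u_i < Σ_i u'_i and all c_{ij} ≤ ρ then there exists a feasible point with cost at most that of (x',u'). In particular, with the lower bound on unmet demand attained, min over φ(y,s) of the cost equals min over X(y,s) of the cost. -/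

import Mathlib

/-!
Since `c i j ≤ ρ`, moving a unit of unmet demand of customer `i` onto spare capacity of
facility `j` changes the cost by `c i j - ρ ≤ 0`. Spreading the unmet demand `u'` over the
spare capacities `r` proportionally, `e i j = u' i * r j / max (∑ u') (∑ r)`, serves
`min (∑ u') (∑ r)` units at once, which leaves exactly the unavoidable unmet demand
`max 0 (∑ d - ∑ cap)` and does not raise the cost. Hence restricting to allocations of
minimal unmet demand does not change the optimal cost.
-/

open Finset

section

variable {N F : Type*} [Fintype N] [Fintype F]

theorem exists_nonneg_rowSum_le_colSum_le_sum_eq_min (a : N → ℝ) (b : F → ℝ)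
    (ha : ∀ i, 0 ≤ a i) (hb : ∀ j, 0 ≤ b j) :
    ∃ e : N → F → ℝ, (∀ i j, 0 ≤ e i j) ∧ (∀ i, ∑ j, e i j ≤ a i) ∧
      (∀ j, ∑ i, e i j ≤ b j) ∧ ∑ i, ∑ j, e i j = min (∑ i, a i) (∑ j, b j) := by
  set A := ∑ i, a i
  set B := ∑ j, b j
  have hA : 0 ≤ A := sum_nonneg fun i _ => ha i
  have hB : 0 ≤ B := sum_nonneg fun j _ => hb j
  have hM : 0 ≤ max A B := hA.trans (le_max_left _ _)
  refine ⟨fun i j => a i * b j / max A B, fun i j => div_nonneg (mul_nonneg (ha i) (hb j)) hM,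
    fun i => ?_, fun j => ?_, ?_⟩
  · rw [← sum_div, ← mul_sum, mul_div_assoc]
    exact mul_le_of_le_one_right (ha i) (div_le_one_of_le₀ (le_max_right _ _) hM)
  · rw [← sum_div, ← sum_mul, mul_comm, mul_div_assoc]
    exact mul_le_of_le_one_right (hb j) (div_le_one_of_le₀ (le_max_left _ _) hM)
  · show ∑ i, ∑ j, a i * b j / max A B = _
    simp_rw [← sum_div]
    rw [← sum_mul_sum, ← min_mul_max A B]
    rcases hM.eq_or_lt with hM0 | hM0
    · rw [← hM0, div_zero]
      linarith [min_le_max (a := A) (b := B), le_min hA hB]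
    · exact mul_div_cancel_right₀ _ hM0.ne'

def IsAllocation (cap : F → ℝ) (d : N → ℝ) (x : N → F → ℝ) (u : N → ℝ) : Prop :=
  (∀ i j, 0 ≤ x i j) ∧ (∀ i, 0 ≤ u i) ∧ (∀ j, ∑ i, x i j ≤ cap j) ∧
    (∀ i, ∑ j, x i j + u i = d i)

def transportCost (c : N → F → ℝ) (ρ : ℝ) (x : N → F → ℝ) (u : N → ℝ) : ℝ :=
  ∑ i, ∑ j, c i j * x i j + ρ * ∑ i, u i

theorem sum_sum_mul_le_mul_sum_sum {c x : N → F → ℝ} {ρ : ℝ} (hρc : ∀ i j, c i j ≤ ρ)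
    (hx : ∀ i j, 0 ≤ x i j) : ∑ i, ∑ j, c i j * x i j ≤ ρ * ∑ i, ∑ j, x i j := by
  simp_rw [mul_sum]
  exact sum_le_sum fun i _ => sum_le_sum fun j _ => mul_le_mul_of_nonneg_right (hρc i j) (hx i j)

theorem transportCost_add_transfer_le {c x e : N → F → ℝ} {ρ : ℝ} (u : N → ℝ)
    (hρc : ∀ i j, c i j ≤ ρ) (he : ∀ i j, 0 ≤ e i j) :
    transportCost c ρ (fun i j => x i j + e i j) (fun i => u i - ∑ j, e i j) ≤
      transportCost c ρ x u := by
  have hce := sum_sum_mul_le_mul_sum_sum hρc he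
  simp only [transportCost, mul_add, sum_add_distrib, sum_sub_distrib, mul_sub] at hce ⊢
  linarith

namespace IsAllocation

variable {cap : F → ℝ} {d : N → ℝ} {x : N → F → ℝ} {u : N → ℝ}

theorem sum_sum_add_sum (h : IsAllocation cap d x u) :
    ∑ i, ∑ j, x i j + ∑ i, u i = ∑ i, d i := by
  rw [← sum_add_distrib]
  exact sum_congr rfl fun i _ => h.2.2.2 i

theorem sum_sum_le_sum_cap (h : IsAllocation cap d x u) : ∑ i, ∑ j, x i j ≤ ∑ j, cap j := by
  rw [sum_comm]
  exact sum_le_sum fun j _ => h.2.2.1 j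

theorem sum_sub_sum_cap_le (h : IsAllocation cap d x u) :
    ∑ i, d i - ∑ j, cap j ≤ ∑ i, u i := by
  linarith [h.sum_sum_add_sum, h.sum_sum_le_sum_cap]

theorem transportCost_le {c : N → F → ℝ} {ρ : ℝ} (hρc : ∀ i j, c i j ≤ ρ)
    (h : IsAllocation cap d x u) : transportCost c ρ x u ≤ ρ * ∑ i, d i := by
  rw [transportCost, ← h.sum_sum_add_sum, mul_add]
  linarith [sum_sum_mul_le_mul_sum_sum hρc h.1]

theorem add_transfer (h : IsAllocation cap d x u) {e : N → F → ℝ} (he : ∀ i j, 0 ≤ e i j)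
    (hrow : ∀ i, ∑ j, e i j ≤ u i) (hcol : ∀ j, ∑ i, e i j ≤ cap j - ∑ i, x i j) :
    IsAllocation cap d (fun i j => x i j + e i j) (fun i => u i - ∑ j, e i j) := by
  refine ⟨fun i j => add_nonneg (h.1 i j) (he i j), fun i => sub_nonneg.2 (hrow i),
    fun j => ?_, fun i => ?_⟩
  · rw [sum_add_distrib]
    linarith [hcol j]
  · rw [sum_add_distrib, ← h.2.2.2 i]
    ring

theorem exists_minimal_unmet_transportCost_le {c : N → F → ℝ} {ρ : ℝ}
    (hρc : ∀ i j, c i j ≤ ρ) (h : IsAllocation cap d x u) :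
    ∃ x' u', IsAllocation cap d x' u' ∧ ∑ i, ∑ j, x i j ≤ ∑ i, ∑ j, x' i j ∧
      (∀ a b, IsAllocation cap d a b → ∑ i, u' i ≤ ∑ i, b i) ∧
      transportCost c ρ x' u' ≤ transportCost c ρ x u := by
  obtain ⟨e, he, hrow, hcol, htot⟩ := exists_nonneg_rowSum_le_colSum_le_sum_eq_min u
    (fun j => cap j - ∑ i, x i j) h.2.1 fun j => sub_nonneg.2 (h.2.2.1 j)
  refine ⟨_, _, h.add_transfer he hrow hcol, ?_, fun a b hab => ?_,
    transportCost_add_transfer_le u hρc he⟩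
  · exact sum_le_sum fun i _ => sum_le_sum fun j _ => le_add_of_nonneg_right (he i j)
  · have hspare : ∑ j, (cap j - ∑ i, x i j) = ∑ j, cap j - ∑ i, ∑ j, x i j := by
      rw [sum_sub_distrib, sum_comm]
    rw [sum_sub_distrib, htot, sub_le_comm, le_min_iff, hspare]
    constructor
    · linarith [sum_nonneg fun i (_ : i ∈ univ) => hab.2.1 i]
    · linarith [h.sum_sum_add_sum, hab.sum_sub_sum_cap_le]

end IsAllocation

end

theorem stmt_6_general (N F : Type*) [Fintype N] [Fintype F]
    (d : N → ℝ)
    (K : F → ℝ)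
    (c : N → F → ℝ)
    (ρ : ℝ) (hρc : ∀ i j, c i j ≤ ρ)
    (y s : F → ℝ)
    (Feas : (N → F → ℝ) → (N → ℝ) → Prop)
    (hFeas : ∀ x u, Feas x u ↔
      (∀ i j, 0 ≤ x i j) ∧ (∀ i, 0 ≤ u i) ∧
      (∀ j, ∑ i, x i j ≤ K j * y j * (1 - s j)) ∧
      (∀ i, ∑ j, x i j + u i = d i)) :
    (∀ x u, Feas x u →
        ∑ i, ∑ j, c i j * x i j + ρ * ∑ i, u i ≤ ρ * ∑ i, d i) ∧
    (∀ x' u', Feas x' u' →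
      ∃ x u, Feas x u ∧
        (∑ i, ∑ j, x' i j ≤ ∑ i, ∑ j, x i j) ∧
        (∀ a b, Feas a b → ∑ i, u i ≤ ∑ i, b i) ∧
        ∑ i, ∑ j, c i j * x i j + ρ * ∑ i, u i ≤
          ∑ i, ∑ j, c i j * x' i j + ρ * ∑ i, u' i) ∧
    sInf {v : ℝ | ∃ x u, Feas x u ∧ (∀ a b, Feas a b → ∑ i, u i ≤ ∑ i, b i) ∧
        v = ∑ i, ∑ j, c i j * x i j + ρ * ∑ i, u i} =
      sInf {v : ℝ | ∃ x u, Feas x u ∧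
        v = ∑ i, ∑ j, c i j * x i j + ρ * ∑ i, u i} := by
  obtain rfl : Feas = IsAllocation (fun j => K j * y j * (1 - s j)) d := by
    funext x u
    exact propext (hFeas x u)
  refine ⟨fun x u h => h.transportCost_le hρc,
    fun x u h => h.exists_minimal_unmet_transportCost_le hρc, ?_⟩
  apply csInf_eq_csInf_of_forall_exists_le
  · rintro _ ⟨x, u, h, -, rfl⟩
    exact ⟨_, ⟨x, u, h, rfl⟩, le_rfl⟩
  · rintro _ ⟨x, u, h, rfl⟩
    obtain ⟨x', u', h', -, hmin, hle⟩ := h.exists_minimal_unmet_transportCost_le hρc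
    exact ⟨_, ⟨x', u', h', hmin, rfl⟩, hle⟩

/-- Proposition 3 (uniform penalty at least the maximum transportation cost):
every feasible cost is at most `ρ ∑ d_i`; every feasible point is dominated by a
feasible point with minimal total unmet demand (and no smaller total allocation);
and the minimum cost over the lower-level argmin set `φ(y,s)` equals the minimum
cost over `X(y,s)`. -/
theorem stmt_6 (N F : Type*) [Fintype N] [Fintype F]
    (d : N → ℝ) (hd : ∀ i, 0 ≤ d i)
    (K : F → ℝ) (hK : ∀ j, 0 ≤ K j)
    (c : N → F → ℝ) (hc : ∀ i j, 0 ≤ c i j)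
    (ρ : ℝ) (hρ : 0 < ρ) (hρc : ∀ i j, c i j ≤ ρ)
    (y s : F → ℝ) (hy : ∀ j, y j = 0 ∨ y j = 1) (hs : ∀ j, s j = 0 ∨ s j = 1)
    (Feas : (N → F → ℝ) → (N → ℝ) → Prop)
    (hFeas : ∀ x u, Feas x u ↔
      (∀ i j, 0 ≤ x i j) ∧ (∀ i, 0 ≤ u i) ∧
      (∀ j, ∑ i, x i j ≤ K j * y j * (1 - s j)) ∧
      (∀ i, ∑ j, x i j + u i = d i)) :
    (∀ x u, Feas x u →
        ∑ i, ∑ j, c i j * x i j + ρ * ∑ i, u i ≤ ρ * ∑ i, d i) ∧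
    (∀ x' u', Feas x' u' →
      ∃ x u, Feas x u ∧
        (∑ i, ∑ j, x' i j ≤ ∑ i, ∑ j, x i j) ∧
        (∀ a b, Feas a b → ∑ i, u i ≤ ∑ i, b i) ∧
        ∑ i, ∑ j, c i j * x i j + ρ * ∑ i, u i ≤
          ∑ i, ∑ j, c i j * x' i j + ρ * ∑ i, u' i) ∧
    sInf {v : ℝ | ∃ x u, Feas x u ∧ (∀ a b, Feas a b → ∑ i, u i ≤ ∑ i, b i) ∧
        v = ∑ i, ∑ j, c i j * x i j + ρ * ∑ i, u i} =
      sInf {v : ℝ | ∃ x u, Feas x u ∧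
        v = ∑ i, ∑ j, c i j * x i j + ρ * ∑ i, u i} :=
  stmt_6_general N F d K c ρ hρc y s Feas hFeas
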